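/- arXiv:1305.3629 — 2 statements merged into one kernel-verified Lean document; each statement's English description precedes it below -/
import Mathlib

section
/- Let κ be a regular uncountable cardinal. The poset ℚ(κ) of bounded approximations to a coherent sequence on κ, ordered by end-extension, is κ-strategically closed (Player II has a winning strategy in the game of length κ). -/
/-- `δ` is an accumulation (limit) point of the set `C` of ordinals. -/
def IsAcc (C : Set Ordinal) (δ : Ordinal) : Prop :=
  0 < δ ∧ ∀ γ < δ, ∃ x ∈ C, γ < x ∧ x < δ

/-- `C` is club in `α`. -/
def IsClubIn (C : Set Ordinal) (α : Ordinal) : Prop :=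
  (∀ x ∈ C, x < α) ∧ (∀ γ < α, ∃ x ∈ C, γ ≤ x) ∧ (∀ δ < α, IsAcc C δ → δ ∈ C)

/-- A condition in `ℚ(κ)`: a bounded approximation `⟨C α | α ≤ top⟩`, `top < κ`,
to a coherent sequence on `κ`. -/
structure QS (κ : Cardinal) where
  top : Ordinal
  top_lt : top < κ.ord
  C : Ordinal → Set Ordinal
  club : ∀ α ≤ top, Order.IsSuccLimit α → IsClubIn (C α) α
  coh : ∀ α α', α' ≤ top → α < α' → IsAcc (C α') α → C α = C α' ∩ Set.Iio α

/-- `p ≤ q` in `ℚ(κ)`: `p` end-extends `q`. -/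
def QSLe {κ : Cardinal} (p q : QS κ) : Prop :=
  q.top ≤ p.top ∧ ∀ α ≤ q.top, p.C α = q.C α

/-- `γ` is an odd stage: `γ = δ + n` with `δ` zero or a limit and `n` odd.
Player I moves at odd stages and Player II at all other stages. -/
def OddStage (γ : Ordinal) : Prop :=
  ∃ (δ : Ordinal) (n : ℕ), (δ = 0 ∨ Order.IsSuccLimit δ) ∧ γ = δ + n ∧ Odd n

namespace QSAux

open Ordinal Set

universe u

variable {κ : Cardinal.{u}}

/-- The type of plays of length `γ`. -/
abbrev Play (γ : Ordinal.{u}) (κ : Cardinal.{u}) := (δ : Ordinal.{u}) → δ < γ → QS κ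

/-- The supremum of the tops played so far. -/
noncomputable def psup (γ : Ordinal.{u}) (p : Play γ κ) : Ordinal :=
  Ordinal.bsup γ (fun δ h => (p δ h).top)

/-- The set of tops played so far. -/
def topsSet (γ : Ordinal.{u}) (p : Play γ κ) : Set Ordinal :=
  {x | ∃ δ, ∃ h : δ < γ, (p δ h).top = x}

/-- The union of the clubs-at-`α` played so far. -/
def playC (γ : Ordinal.{u}) (p : Play γ κ) (α : Ordinal) : Set Ordinal :=
  {x | ∃ δ, ∃ h : δ < γ, α ≤ (p δ h).top ∧ x ∈ (p δ h).C α}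

/-- The supremum of the tops is attained. -/
def Attained (γ : Ordinal.{u}) (p : Play γ κ) : Prop :=
  ∃ δ, ∃ h : δ < γ, (p δ h).top = psup γ p

/-- The play is a decreasing chain. -/
def Dec (γ : Ordinal.{u}) (p : Play γ κ) : Prop :=
  ∀ δ δ' (h : δ < δ') (h' : δ' < γ), QSLe (p δ' h') (p δ (h.trans h'))

/-- The invariant maintained by Player II's strategy. -/
def Guard (γ : Ordinal.{u}) (p : Play γ κ) : Prop :=
  psup γ p < κ.ord ∧ Dec γ p ∧
  ∀ (δ : Ordinal.{u}) (h : δ < γ), Order.IsSuccLimit δ → ¬ Attained δ (fun x hx => p x (hx.trans h)) →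
    (p δ h).top = psup δ (fun x hx => p x (hx.trans h)) ∧
    (p δ h).C ((p δ h).top) = topsSet δ (fun x hx => p x (hx.trans h))

variable {γ : Ordinal.{u}} {p : Play γ κ}

lemma le_psup (δ : Ordinal.{u}) (h : δ < γ) : (p δ h).top ≤ psup γ p :=
  Ordinal.le_bsup _ δ h

lemma lt_psup {a : Ordinal.{u}} : a < psup γ p ↔ ∃ δ, ∃ h : δ < γ, a < (p δ h).top :=
  Ordinal.lt_bsup _

lemma psup_le {a : Ordinal.{u}} (h : ∀ δ (hδ : δ < γ), (p δ hδ).top ≤ a) : psup γ p ≤ a :=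
  Ordinal.bsup_le h

lemma top_mono (hD : Dec γ p) {δ δ' : Ordinal.{u}} (hle : δ ≤ δ') (h' : δ' < γ) :
    (p δ (lt_of_le_of_lt hle h')).top ≤ (p δ' h').top := by
  rcases eq_or_lt_of_le hle with rfl | hlt
  · exact le_rfl
  · exact (hD δ δ' hlt h').1

lemma playC_eq (hD : Dec γ p) {α δ : Ordinal.{u}} (h : δ < γ) (hα : α ≤ (p δ h).top) :
    playC γ p α = (p δ h).C α := by
  ext x
  constructor
  · rintro ⟨d, hd, hαd, hx⟩
    rcases lt_trichotomy d δ with hlt | heq | hlt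
    · rw [(hD d δ hlt h).2 α hαd]
      exact hx
    · subst heq; exact hx
    · rw [← (hD δ d hlt hd).2 α hα]
      exact hx
  · intro hx
    exact ⟨δ, h, hα, hx⟩

lemma not_oddStage_of_isLimit {o : Ordinal.{u}} (h : Order.IsSuccLimit o) : ¬ OddStage o := by
  rintro ⟨δ, n, -, rfl, hn⟩
  obtain ⟨m, rfl⟩ := hn
  have he : δ + ((2 * m + 1 : ℕ) : Ordinal) = Order.succ (δ + (2 * m : ℕ)) := by
    push_cast
    rw [← add_assoc, Ordinal.add_one_eq_succ]
  rw [he] at h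
  exact Order.not_isSuccLimit_succ _ h

lemma tops_lt (hA : ¬ Attained γ p) (δ : Ordinal.{u}) (h : δ < γ) :
    (p δ h).top < psup γ p :=
  lt_of_le_of_ne (le_psup δ h) (fun he => hA ⟨δ, h, he⟩)

/-- The key structural lemma: accumulation points of the set of tops are themselves
tops of limit-stage moves, where Player II played the set of earlier tops as her club. -/
lemma acc_tops (hG : Guard γ p) {α : Ordinal.{u}} (hαs : α < psup γ p)
    (hacc : IsAcc (topsSet γ p) α) :
    ∃ δ, ∃ h : δ < γ, (p δ h).top = α ∧ (p δ h).C α = topsSet γ p ∩ Set.Iio α := by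
  obtain ⟨hpos, hub⟩ := hacc
  set S : Set Ordinal := {δ | ∃ h : δ < γ, α ≤ (p δ h).top} with hS
  have hne : S.Nonempty := by
    obtain ⟨d, hd, hαd⟩ := lt_psup.1 hαs
    exact ⟨d, hd, hαd.le⟩
  have hmem : ∃ hlt : sInf S < γ, α ≤ (p (sInf S) hlt).top := csInf_mem hne
  obtain ⟨hδγ, hαtop⟩ := hmem
  have hbelow : ∀ x (hx : x < sInf S), (p x (hx.trans hδγ)).top < α := by
    intro x hx
    by_contra hcon
    push_neg at hcon
    have hxS : x ∈ S := ⟨hx.trans hδγ, hcon⟩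
    exact absurd (csInf_le' hxS) (not_le.2 hx)
  have hlt_iff : ∀ x (hxγ : x < γ), (p x hxγ).top < α → x < sInf S := by
    intro x hxγ hxα
    by_contra hcon
    push_neg at hcon
    exact absurd (le_trans hαtop (top_mono hG.2.1 hcon hxγ)) (not_le.2 hxα)
  have hds_lim : Order.IsSuccLimit (sInf S) := by
    rcases Ordinal.zero_or_succ_or_isSuccLimit (sInf S) with h0 | ⟨b, hb⟩ | hl
    · obtain ⟨x, hx, hx1, hx2⟩ := hub 0 hpos
      obtain ⟨d, hd, rfl⟩ := hx
      have hlt := hlt_iff d hd hx2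
      rw [h0] at hlt
      exact absurd hlt (not_lt_zero (a := d))
    · have hbS : b < sInf S := by rw [← hb]; exact Order.lt_succ b
      have hbγ : b < γ := hbS.trans hδγ
      obtain ⟨x, hx, hx1, hx2⟩ := hub _ (hbelow b hbS)
      obtain ⟨d, hd, rfl⟩ := hx
      have hdlt := hlt_iff d hd hx2
      rw [← hb, Order.lt_succ_iff] at hdlt
      exact absurd (top_mono hG.2.1 hdlt hbγ) (not_le.2 hx1)
    · exact hl
  have hsup : psup (sInf S) (fun x hx => p x (hx.trans hδγ)) = α := by
    apply le_antisymm
    · exact psup_le (fun x hx => (hbelow x hx).le)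
    · by_contra hcon
      push_neg at hcon
      obtain ⟨x, hx, hx1, hx2⟩ := hub _ hcon
      obtain ⟨d, hd, rfl⟩ := hx
      have hdlt := hlt_iff d hd hx2
      exact absurd (le_psup (p := fun x hx => p x (hx.trans hδγ)) d hdlt) (not_le.2 hx1)
  have hnatt : ¬ Attained (sInf S) (fun x hx => p x (hx.trans hδγ)) := by
    rintro ⟨d, hd, hdeq⟩
    rw [hsup] at hdeq
    exact absurd hdeq (hbelow d hd).ne
  obtain ⟨htop, hC⟩ := hG.2.2 (sInf S) hδγ hds_lim hnatt
  rw [hsup] at htop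
  refine ⟨sInf S, hδγ, htop, ?_⟩
  rw [htop] at hC
  rw [hC]
  ext x
  constructor
  · rintro ⟨d, hd, rfl⟩
    exact ⟨⟨d, hd.trans hδγ, rfl⟩, hbelow d hd⟩
  · rintro ⟨⟨d, hd, rfl⟩, hxα⟩
    exact ⟨d, hlt_iff d hd hxα, rfl⟩

lemma build_club (hG : Guard γ p) (hA : ¬ Attained γ p) :
    ∀ α, α ≤ psup γ p → Order.IsSuccLimit α →
      IsClubIn (if α = psup γ p then topsSet γ p else playC γ p α) α := by
  intro α hα hlim
  rcases eq_or_lt_of_le hα with heq | hαlt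
  · subst heq
    rw [if_pos rfl]
    refine ⟨?_, ?_, ?_⟩
    · rintro x ⟨d, hd, rfl⟩
      exact tops_lt hA d hd
    · intro β hβ
      obtain ⟨d, hd, hβd⟩ := lt_psup.1 hβ
      exact ⟨_, ⟨d, hd, rfl⟩, hβd.le⟩
    · intro a ha hacc
      obtain ⟨d, hd, htop, -⟩ := acc_tops hG ha hacc
      exact ⟨d, hd, htop⟩
  · rw [if_neg hαlt.ne]
    obtain ⟨d, hd, hαd⟩ := lt_psup.1 hαlt
    rw [playC_eq hG.2.1 hd hαd.le]
    exact (p d hd).club α hαd.le hlim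

lemma build_coh (hG : Guard γ p) (hA : ¬ Attained γ p) :
    ∀ α α', α' ≤ psup γ p → α < α' →
      IsAcc (if α' = psup γ p then topsSet γ p else playC γ p α') α →
      (if α = psup γ p then topsSet γ p else playC γ p α)
        = (if α' = psup γ p then topsSet γ p else playC γ p α') ∩ Set.Iio α := by
  intro α α' hα' hαα' hacc
  rcases eq_or_lt_of_le hα' with heq | hlt
  · subst heq
    rw [if_pos rfl] at hacc ⊢
    rw [if_neg hαα'.ne]
    obtain ⟨d, hd, htop, hC⟩ := acc_tops hG hαα' hacc
    rw [playC_eq hG.2.1 hd htop.ge]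
    exact hC
  · rw [if_neg hlt.ne] at hacc ⊢
    rw [if_neg (hαα'.trans hlt).ne]
    obtain ⟨d, hd, hαd⟩ := lt_psup.1 hlt
    rw [playC_eq hG.2.1 hd hαd.le] at hacc ⊢
    rw [playC_eq hG.2.1 hd (hαα'.le.trans hαd.le)]
    exact (p d hd).coh α α' hαd.le hαα' hacc

open scoped Classical in
/-- Player II's strategy. -/
noncomputable def build (h0 : (0 : Ordinal) < κ.ord) (γ : Ordinal.{u}) (p : Play γ κ) : QS κ :=
  if hG : Guard γ p then
    if hA : Attained γ p then p hA.choose hA.choose_spec.choose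
    else
      { top := psup γ p
        top_lt := hG.1
        C := fun α => if α = psup γ p then topsSet γ p else playC γ p α
        club := fun α hα hlim => build_club hG hA α hα hlim
        coh := fun α α' hα' hαα' hacc => build_coh hG hA α α' hα' hαα' hacc }
  else
    { top := 0
      top_lt := h0
      C := fun _ => ∅
      club := fun α hα hlim => absurd (nonpos_iff_eq_zero.1 hα) hlim.pos.ne'
      coh := fun α α' h' h _ => absurd (h.trans_le h') (not_lt_zero (a := α)) }

lemma guard_of (h0 : (0 : Ordinal) < κ.ord) (hreg : κ.IsRegular) :
    ∀ γ : Ordinal.{u}, γ < κ.ord → ∀ p : Play γ κ, Dec γ p →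
      (∀ (δ : Ordinal.{u}) (h : δ < γ), ¬ OddStage δ →
        p δ h = build h0 δ (fun x hx => p x (hx.trans h))) →
      Guard γ p := by
  intro γ
  induction γ using Ordinal.induction with
  | h γ IH =>
    intro hγ p hD hF
    refine ⟨?_, hD, ?_⟩
    · refine Ordinal.bsup_lt_ord ?_ (fun i hi => (p i hi).top_lt)
      rw [hreg.cof_eq]
      exact Cardinal.lt_ord.1 hγ
    · intro δ h hlim hnatt
      have hpd := hF δ h (not_oddStage_of_isLimit hlim)
      have hGr : Guard δ (fun x hx => p x (hx.trans h)) :=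
        IH δ h (h.trans hγ) _ (fun a b hab hb => hD a b hab (hb.trans h))
          (fun x hx ho => hF x (hx.trans h) ho)
      rw [hpd, build, dif_pos hGr, dif_neg hnatt]
      exact ⟨rfl, if_pos rfl⟩

end QSAux

/-- `ℚ(κ)` is `κ`-strategically closed: Player II has a winning strategy `σ` in the
game of length `κ`, i.e. a rule producing, at every even or limit stage `γ < κ` of any
legal play in which II has so far followed `σ`, a lower bound for the play so far. -/
theorem stmt_16 (κ : Cardinal) (hreg : κ.IsRegular) (huc : Cardinal.aleph0 < κ) :
    ∃ σ : (γ : Ordinal) → ((δ : Ordinal) → δ < γ → QS κ) → QS κ,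
      ∀ γ, γ < κ.ord → ¬ OddStage γ →
        ∀ p : (δ : Ordinal) → δ < γ → QS κ,
          (∀ δ δ' (h : δ < δ') (h' : δ' < γ), QSLe (p δ' h') (p δ (h.trans h'))) →
          (∀ δ (h : δ < γ), ¬ OddStage δ →
            p δ h = σ δ (fun x hx => p x (hx.trans h))) →
          ∀ δ (h : δ < γ), QSLe (σ γ p) (p δ h) := by
  have h0 : (0 : Ordinal) < κ.ord := by
    rw [Cardinal.lt_ord]
    simpa using (Cardinal.aleph0_pos.trans huc)
  refine ⟨QSAux.build h0, ?_⟩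
  intro γ hγ _ p hD hF δ h
  have hG : QSAux.Guard γ p := QSAux.guard_of h0 hreg γ hγ p hD hF
  rw [QSAux.build, dif_pos hG]
  by_cases hA : QSAux.Attained γ p
  · rw [dif_pos hA]
    have hd0 : hA.choose < γ := hA.choose_spec.choose
    have hspec : (p hA.choose hA.choose_spec.choose).top = QSAux.psup γ p :=
      hA.choose_spec.choose_spec
    rcases lt_trichotomy δ hA.choose with hlt | heq | hlt
    · exact hD δ hA.choose hlt hd0
    · subst heq
      exact ⟨le_rfl, fun _ _ => rfl⟩
    · have hDd := hD hA.choose δ hlt h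
      have htope : (p δ h).top = (p hA.choose hd0).top :=
        le_antisymm (le_of_le_of_eq (QSAux.le_psup δ h) hspec.symm) hDd.1
      exact ⟨htope.le, fun α hα => (hDd.2 α (hα.trans htope.le)).symm⟩
  · rw [dif_neg hA]
    refine ⟨QSAux.le_psup δ h, fun α hα => ?_⟩
    have hαs : α < QSAux.psup γ p := lt_of_le_of_lt hα (QSAux.tops_lt hA δ h)
    show (if α = QSAux.psup γ p then QSAux.topsSet γ p else QSAux.playC γ p α) = (p δ h).C α
    rw [if_neg hαs.ne, QSAux.playC_eq hG.2.1 h hα]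
end

section
/- Let μ ≤ κ be infinite cardinals with μ regular. If □_κ holds, then □^μ(κ⁺) holds. -/
/-- The order type of a set of ordinals. -/
noncomputable def otp (X : Set Ordinal) : Ordinal.{1} :=
  Ordinal.type ((· < ·) : X → X → Prop)

/-- `S` is stationary in `α`. -/
def IsStationaryIn (S : Set Ordinal) (α : Ordinal) : Prop :=
  ∀ C, IsClubIn C α → (S ∩ C).Nonempty

/-- `C` is a coherent sequence on `lam`: each `C α` is club in `α` for limit
`α < lam`, and if `α` is a limit point of `C β` then `C α = C β ∩ α`. -/
def Coherent (lam : Ordinal) (C : Ordinal → Set Ordinal) : Prop :=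
  (∀ α, α < lam → Order.IsSuccLimit α → IsClubIn (C α) α) ∧
  (∀ α β, β < lam → α < β → IsAcc (C β) α → C α = C β ∩ Set.Iio α)

/-- `T` threads the coherent sequence `C`. -/
def IsThread (lam : Ordinal) (C : Ordinal → Set Ordinal) (T : Set Ordinal) : Prop :=
  IsClubIn T lam ∧ ∀ α, IsAcc T α → T ∩ Set.Iio α = C α

/-- A `□(lam)`-sequence: a coherent sequence with no thread. -/
def SqSeq (lam : Ordinal) (C : Ordinal → Set Ordinal) : Prop :=
  Coherent lam C ∧ ¬ ∃ T, IsThread lam C T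

/-- The sequence `C` avoids the set `S`: no element of `S` is a limit point of any `C α`. -/
def Avoids (lam : Ordinal) (C : Ordinal → Set Ordinal) (S : Set Ordinal) : Prop :=
  ∀ α, α < lam → Order.IsSuccLimit α → ∀ β, β < α → IsAcc (C α) β → β ∉ S

/-- `□(lam, S)`: there is a `□(lam)`-sequence avoiding `S`. -/
def SqAvoid (lam : Ordinal) (S : Set Ordinal) : Prop :=
  ∃ C, SqSeq lam C ∧ Avoids lam C S

/-- `□^μ(lam)`: there is a `□(lam)`-sequence such that
`{α ∈ S^lam_μ | C_α^{[μ]} is bounded below α}` is stationary, where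
`C_α^{[μ]} = {γ ∈ C α | μ ∣ otp (C α ∩ γ)}`. -/
def SqMu (mu : Cardinal) (lam : Ordinal) : Prop :=
  ∃ C, SqSeq lam C ∧ IsStationaryIn
    {α | α < lam ∧ α.cof = mu ∧
      ∃ ξ < α, ∀ γ ∈ C α, Ordinal.lift.{1,0} mu.ord ∣ otp (C α ∩ Set.Iio γ) → γ ≤ ξ}
    lam

namespace Stmt17Aux

open Ordinal Set Cardinal

/-! ### basic facts about `otp` -/

lemma otp_inter_Iio {X : Set Ordinal} {γ : Ordinal} (hγ : γ ∈ X) :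
    otp (X ∩ Set.Iio γ) =
      Ordinal.typein ((· < ·) : X → X → Prop) ⟨γ, hγ⟩ := by
  rw [← Ordinal.type_subrel]
  refine Ordinal.type_eq.2 ⟨?_⟩
  exact {
    toFun := fun x => ⟨⟨x.1, x.2.1⟩, x.2.2⟩
    invFun := fun x => ⟨x.1.1, x.1.2, x.2⟩
    left_inv := fun x => rfl
    right_inv := fun x => rfl
    map_rel_iff' := Iff.rfl }

lemma pos_lt_otp {X : Set Ordinal} {γ : Ordinal} (hγ : γ ∈ X) :
    otp (X ∩ Set.Iio γ) < otp X := by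
  rw [otp_inter_Iio hγ]
  exact Ordinal.typein_lt_type _ _

lemma pos_lt_pos {X : Set Ordinal} {γ δ : Ordinal} (hγ : γ ∈ X) (hδ : δ ∈ X)
    (h : γ < δ) : otp (X ∩ Set.Iio γ) < otp (X ∩ Set.Iio δ) := by
  rw [otp_inter_Iio hγ, otp_inter_Iio hδ]
  exact (Ordinal.typein_lt_typein _).2 h

lemma pos_lt_pos_iff {X : Set Ordinal} {γ δ : Ordinal} (hγ : γ ∈ X) (hδ : δ ∈ X) :
    otp (X ∩ Set.Iio γ) < otp (X ∩ Set.Iio δ) ↔ γ < δ := by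
  rw [otp_inter_Iio hγ, otp_inter_Iio hδ]
  exact Ordinal.typein_lt_typein _

lemma pos_surj {X : Set Ordinal} {p : Ordinal.{1}} (hp : p < otp X) :
    ∃ γ, ∃ hγ : γ ∈ X, otp (X ∩ Set.Iio γ) = p := by
  obtain ⟨a, ha⟩ := Ordinal.typein_surj ((· < ·) : X → X → Prop) hp
  exact ⟨a.1, a.2, by rw [otp_inter_Iio a.2]; exact ha⟩

lemma otp_ne_zero_of_nonempty {X : Set Ordinal} (h : X.Nonempty) : otp X ≠ 0 := by
  rw [Ne, otp, Ordinal.type_eq_zero_iff_isEmpty]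
  exact fun h' => h'.false ⟨h.choose, h.choose_spec⟩


/-! ### accumulation point basics -/

lemma isAcc_mono {X Y : Set Ordinal} {δ : Ordinal} (hXY : X ⊆ Y) (h : IsAcc X δ) :
    IsAcc Y δ := by
  refine ⟨h.1, fun γ hγ => ?_⟩
  obtain ⟨x, hx, hx1, hx2⟩ := h.2 γ hγ
  exact ⟨x, hXY hx, hx1, hx2⟩

lemma isAcc_isLimit {X : Set Ordinal} {δ : Ordinal} (h : IsAcc X δ) : Order.IsSuccLimit δ := by
  refine Ordinal.isSuccLimit_iff.2 ⟨h.1.ne', Order.isSuccPrelimit_of_succ_lt fun a ha => ?_⟩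
  obtain ⟨x, _, hx1, hx2⟩ := h.2 a ha
  exact lt_of_le_of_lt (Order.succ_le_of_lt hx1) hx2

lemma isAcc_not_empty {δ : Ordinal} (h : IsAcc (∅ : Set Ordinal) δ) : False := by
  obtain ⟨x, hx, -⟩ := h.2 0 h.1
  exact hx

/-! ### the almost-thread family of clubs built from a fixed closed set `u` -/

/-- The sup of the part of `u` below `t`. -/
noncomputable def sfn (u : Set Ordinal.{1}) (t : Ordinal.{1}) : Ordinal.{1} :=
  sSup (u ∩ Set.Iio t)

/-- The canonical coherent family of clubs determined by a fixed set `u`: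
the part of `u` below `t`, together with the final segment of `t` above `u ∩ t`. -/
noncomputable def Efam (u : Set Ordinal.{1}) (t : Ordinal.{1}) : Set Ordinal.{1} :=
  (u ∩ Set.Iio t) ∪ {x | sfn u t ≤ x ∧ x < t}

lemma Efam_subset {u : Set Ordinal.{1}} {t x : Ordinal.{1}} (hx : x ∈ Efam u t) : x < t := by
  rcases hx with h | h
  · exact h.2
  · exact h.2

lemma Efam_unbounded {u : Set Ordinal.{1}} {t p : Ordinal.{1}} (hp : p < t) :
    ∃ x ∈ Efam u t, p ≤ x := by
  rcases le_or_gt (sfn u t) p with h | h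
  · exact ⟨p, Or.inr ⟨h, hp⟩, le_rfl⟩
  · rcases (u ∩ Set.Iio t).eq_empty_or_nonempty with he | hne
    · rw [sfn, he, csSup_empty] at h
      exact absurd h (not_lt_of_ge (zero_le : (0:Ordinal) ≤ p))
    · obtain ⟨x, hx, hpx⟩ := exists_lt_of_lt_csSup hne h
      exact ⟨x, Or.inl hx, hpx.le⟩


lemma sfn_le_sSup {u : Set Ordinal.{1}} (hbdd : BddAbove u) (t : Ordinal.{1}) :
    sfn u t ≤ sSup u := by
  rcases (u ∩ Set.Iio t).eq_empty_or_nonempty with he | hne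
  · rw [sfn, he, csSup_empty]
    exact zero_le
  · exact csSup_le_csSup hbdd hne inter_subset_left

lemma Efam_closed {u : Set Ordinal.{1}} (hbdd : BddAbove u)
    (hucl : ∀ x, IsAcc u x → x < sSup u → x ∈ u) {t x : Ordinal.{1}}
    (hxt : x < t) (hx : IsAcc (Efam u t) x) : x ∈ Efam u t := by
  rcases le_or_gt (sfn u t) x with h | h
  · exact Or.inr ⟨h, hxt⟩
  · have hmem : ∀ y ∈ Efam u t, y < x → y ∈ u ∩ Set.Iio t := by
      intro y hy hyx
      rcases hy with h' | h'
      · exact h'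
      · exact absurd (lt_of_le_of_lt h'.1 (hyx.trans h)) (lt_irrefl _)
    have hacc : IsAcc u x := by
      refine ⟨hx.1, fun γ hγ => ?_⟩
      obtain ⟨y, hy, hy1, hy2⟩ := hx.2 γ hγ
      exact ⟨y, (hmem y hy hy2).1, hy1, hy2⟩
    exact Or.inl ⟨hucl x hacc (lt_of_lt_of_le h (sfn_le_sSup hbdd t)), hxt⟩

lemma Efam_coherent {u : Set Ordinal.{1}} (hbdd : BddAbove u) {t t' : Ordinal.{1}}
    (htt : t' < t) (hacc : IsAcc (Efam u t) t') :
    Efam u t' = Efam u t ∩ Set.Iio t' := by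
  rcases lt_or_ge (sfn u t) t' with hA | hB
  · -- case A : t' is above the sup of `u ∩ t`; both sides are `u`-part plus a tail
    have hsub : u ∩ Set.Iio t' = u ∩ Set.Iio t := by
      apply Set.eq_of_subset_of_subset
      · exact inter_subset_inter_right _ (fun y hy => lt_trans hy htt)
      · intro y hy
        exact ⟨hy.1, lt_of_le_of_lt (le_csSup (hbdd.mono inter_subset_left) hy) hA⟩
    have hs : sfn u t' = sfn u t := by rw [sfn, sfn, hsub]
    ext y
    constructor
    · rintro (h | h)
      · exact ⟨Or.inl (hsub ▸ h), h.2⟩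
      · exact ⟨Or.inr ⟨hs ▸ h.1, lt_trans h.2 htt⟩, h.2⟩
    · rintro ⟨h | h, hy⟩
      · exact Or.inl ⟨h.1, hy⟩
      · exact Or.inr ⟨hs.symm ▸ h.1, hy⟩
  · -- case B : t' is inside the `u`-part; both sides are `u ∩ t'`
    have hwit : ∀ γ < t', ∃ y ∈ u ∩ Set.Iio t', γ < y := by
      intro γ hγ
      obtain ⟨y, hy, hy1, hy2⟩ := hacc.2 γ hγ
      rcases hy with h' | h'
      · exact ⟨y, ⟨h'.1, hy2⟩, hy1⟩
      · exact absurd (lt_of_le_of_lt (hB.trans h'.1) hy2) (lt_irrefl _)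
    have hne : (u ∩ Set.Iio t').Nonempty := by
      obtain ⟨y, hy, -⟩ := hwit 0 hacc.1
      exact ⟨y, hy⟩
    have hs' : sfn u t' = t' := by
      refine le_antisymm (csSup_le hne (fun y hy => hy.2.le)) ?_
      by_contra hlt
      push_neg at hlt
      obtain ⟨y, hy, hy1⟩ := hwit _ hlt
      exact absurd (le_csSup (hbdd.mono inter_subset_left) hy) (not_le.2 hy1)
    have htail : {x | sfn u t' ≤ x ∧ x < t'} = (∅ : Set Ordinal.{1}) := by
      ext y
      simp only [mem_setOf_eq, mem_empty_iff_false, iff_false, not_and, not_lt, hs']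
      exact fun h => h
    ext y
    constructor
    · rintro (h | h)
      · exact ⟨Or.inl ⟨h.1, lt_trans h.2 htt⟩, h.2⟩
      · exact absurd h (by rw [show {x | sfn u t' ≤ x ∧ x < t'} = (∅ : Set Ordinal.{1}) from htail]; exact id)
    · rintro ⟨h | h, hy⟩
      · exact Or.inl ⟨h.1, hy⟩
      · exact absurd hy (not_lt.2 (hB.trans h.1))


lemma Efam_top {u : Set Ordinal.{1}} {t : Ordinal.{1}}
    (hsub : ∀ y ∈ u, y < t) (hsup : sSup u = t) : Efam u t = u := by
  have h1 : u ∩ Set.Iio t = u := by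
    apply Set.eq_of_subset_of_subset inter_subset_left
    exact fun y hy => ⟨hy, hsub y hy⟩
  have h2 : sfn u t = t := by rw [sfn, h1, hsup]
  ext y
  constructor
  · rintro (h | h)
    · exact (h1 ▸ h : y ∈ u)
    · exact absurd (lt_of_le_of_lt (h2 ▸ h.1) h.2) (lt_irrefl _)
  · intro hy
    exact Or.inl ⟨hy, hsub y hy⟩


/-! ### the modified sequence `Dseq` -/

/-- The `□`-sequence obtained from `C` by filtering positions along the family `Efam u`. -/
noncomputable def Dseq (lam : Ordinal) (C : Ordinal → Set Ordinal) (u : Set Ordinal.{1}) :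
    Ordinal → Set Ordinal :=
  fun β => {γ | β < lam ∧ Order.IsSuccLimit β ∧ γ ∈ C β ∧
    otp (C β ∩ Set.Iio γ) ∈ Efam u (otp (C β))}

lemma Dseq_subset {lam : Ordinal} {C : Ordinal → Set Ordinal} {u : Set Ordinal.{1}} {β : Ordinal} :
    Dseq lam C u β ⊆ C β := fun _ h => h.2.2.1

lemma Dseq_isClub {lam : Ordinal} {C : Ordinal → Set Ordinal} {u : Set Ordinal.{1}}
    (hC : Coherent lam C) (hbdd : BddAbove u)
    (hucl : ∀ x, IsAcc u x → x < sSup u → x ∈ u)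
    {α : Ordinal} (hα : α < lam) (hlim : Order.IsSuccLimit α) :
    IsClubIn (Dseq lam C u α) α := by
  obtain ⟨hsub, hunb, hcl⟩ := hC.1 α hα hlim
  refine ⟨fun x hx => hsub x (Dseq_subset hx), ?_, ?_⟩
  · -- unbounded
    intro γ hγ
    obtain ⟨c, hc, hγc⟩ := hunb γ hγ
    obtain ⟨q, hq, hpq⟩ := Efam_unbounded (u := u) (pos_lt_otp hc)
    obtain ⟨c', hc', hc'q⟩ := pos_surj (lt_of_lt_of_le (Efam_subset hq) le_rfl : q < otp (C α))
    refine ⟨c', ⟨hα, hlim, hc', by rw [hc'q]; exact hq⟩, ?_⟩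
    refine le_trans hγc ?_
    by_contra hcc
    push_neg at hcc
    exact absurd (hc'q ▸ pos_lt_pos hc' hc hcc) (not_lt.2 hpq)
  · -- closed
    intro δ hδ hacc
    have haccC : IsAcc (C α) δ := isAcc_mono Dseq_subset hacc
    have hδC : δ ∈ C α := hcl δ hδ haccC
    refine ⟨hα, hlim, hδC, ?_⟩
    refine Efam_closed hbdd hucl (pos_lt_otp hδC) ⟨?_, ?_⟩
    · obtain ⟨y, hy, -, hy2⟩ := hacc.2 0 hacc.1
      exact lt_of_le_of_lt (zero_le) (pos_lt_pos (Dseq_subset hy) hδC hy2)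
    · intro p hp
      obtain ⟨z, hz, hzp⟩ := pos_surj (lt_trans hp (pos_lt_otp hδC))
      have hzδ : z < δ := by
        by_contra hzz
        push_neg at hzz
        rcases eq_or_lt_of_le hzz with rfl | hlt
        · exact absurd hzp (ne_of_lt hp).symm
        · exact absurd (lt_trans (hzp ▸ hp) (pos_lt_pos hδC hz hlt)) (lt_irrefl _)
      obtain ⟨y, hy, hy1, hy2⟩ := hacc.2 z hzδ
      refine ⟨otp (C α ∩ Set.Iio y), hy.2.2.2, ?_, ?_⟩
      · exact hzp ▸ pos_lt_pos hz (Dseq_subset hy) hy1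
      · exact pos_lt_pos (Dseq_subset hy) hδC hy2


lemma Dseq_coherent {lam : Ordinal} {C : Ordinal → Set Ordinal} {u : Set Ordinal.{1}}
    (hC : Coherent lam C) (hbdd : BddAbove u)
    (hucl : ∀ x, IsAcc u x → x < sSup u → x ∈ u) :
    Coherent lam (Dseq lam C u) := by
  constructor
  · exact fun α hα hlim => Dseq_isClub hC hbdd hucl hα hlim
  · intro α β hβ hαβ hacc
    obtain ⟨y₀, hy₀, -, -⟩ := hacc.2 0 hacc.1
    have hβlim : Order.IsSuccLimit β := hy₀.2.1
    have haccC : IsAcc (C β) α := isAcc_mono Dseq_subset hacc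
    have hαlim : Order.IsSuccLimit α := isAcc_isLimit hacc
    have hαC : α ∈ C β := (hC.1 β hβ hβlim).2.2 α hαβ haccC
    have hcoh : C α = C β ∩ Set.Iio α := hC.2 α β hβ hαβ haccC
    have posAgree : ∀ γ, γ < α → C α ∩ Set.Iio γ = C β ∩ Set.Iio γ := by
      intro γ hγ
      rw [hcoh, inter_assoc]
      congr 1
      ext y
      exact ⟨fun h => h.2, fun h => ⟨lt_trans h hγ, h⟩⟩
    have htau : otp (C α) = otp (C β ∩ Set.Iio α) := by rw [hcoh]
    have hqt : otp (C β ∩ Set.Iio α) < otp (C β) := pos_lt_otp hαC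
    have hEacc : IsAcc (Efam u (otp (C β))) (otp (C β ∩ Set.Iio α)) := by
      constructor
      · obtain ⟨y, hy, -, hy2⟩ := hacc.2 0 hacc.1
        exact lt_of_le_of_lt (zero_le) (pos_lt_pos (Dseq_subset hy) hαC hy2)
      · intro p hp
        obtain ⟨z, hz, hzp⟩ := pos_surj (lt_trans hp hqt)
        have hzα : z < α := by
          by_contra hzz
          push_neg at hzz
          rcases eq_or_lt_of_le hzz with rfl | hlt
          · exact absurd hzp (ne_of_lt hp).symm
          · exact absurd (lt_trans (hzp ▸ hp) (pos_lt_pos hαC hz hlt)) (lt_irrefl _)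
        obtain ⟨y, hy, hy1, hy2⟩ := hacc.2 z hzα
        refine ⟨otp (C β ∩ Set.Iio y), hy.2.2.2, ?_, ?_⟩
        · exact hzp ▸ pos_lt_pos hz (Dseq_subset hy) hy1
        · exact pos_lt_pos (Dseq_subset hy) hαC hy2
    have hE : Efam u (otp (C β ∩ Set.Iio α)) =
        Efam u (otp (C β)) ∩ Set.Iio (otp (C β ∩ Set.Iio α)) :=
      Efam_coherent hbdd hqt hEacc
    ext γ
    constructor
    · rintro ⟨-, -, hγC, hγE⟩
      have hγCβ : γ ∈ C β ∩ Set.Iio α := hcoh ▸ hγC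
      have hposγ : otp (C α ∩ Set.Iio γ) = otp (C β ∩ Set.Iio γ) := by
        rw [posAgree γ hγCβ.2]
      rw [hposγ, htau, hE] at hγE
      exact ⟨⟨hβ, hβlim, hγCβ.1, hγE.1⟩, hγCβ.2⟩
    · rintro ⟨⟨-, -, hγC, hγE⟩, hγα⟩
      have hγCα : γ ∈ C α := by
        rw [hcoh]
        exact ⟨hγC, hγα⟩
      refine ⟨lt_trans hαβ hβ, hαlim, hγCα, ?_⟩
      have hposγ : otp (C α ∩ Set.Iio γ) = otp (C β ∩ Set.Iio γ) := by
        rw [posAgree γ hγα]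
      rw [hposγ, htau, hE]
      exact ⟨hγE, pos_lt_pos hγC hαC hγα⟩

lemma Dseq_noThread {lam : Ordinal} {C : Ordinal → Set Ordinal} {u : Set Ordinal.{1}}
    (hlam : Order.IsSuccLimit lam) : ¬ ∃ T, IsThread lam (Dseq lam C u) T := by
  rintro ⟨T, ⟨hTsub, hTunb, -⟩, hTcoh⟩
  have hAcc : IsAcc T lam := by
    refine ⟨hlam.pos, fun γ hγ => ?_⟩
    obtain ⟨x, hx, hxx⟩ := hTunb (Order.succ γ) (hlam.succ_lt hγ)
    exact ⟨x, hx, lt_of_lt_of_le (Order.lt_succ γ) hxx, hTsub x hx⟩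
  have h := hTcoh lam hAcc
  obtain ⟨x, hx, -⟩ := hTunb 0 hlam.pos
  have hx' : x ∈ Dseq lam C u lam := h ▸ ⟨hx, hTsub x hx⟩
  exact absurd hx'.1 (lt_irrefl lam)


/-! ### climbing chains through a club -/

noncomputable def nextIn (X : Set Ordinal.{0}) (y : Ordinal) : Ordinal :=
  sInf {x | x ∈ X ∧ y < x}

lemma nextIn_spec {X : Set Ordinal.{0}} {y : Ordinal}
    (hne : {x | x ∈ X ∧ y < x}.Nonempty) : nextIn X y ∈ X ∧ y < nextIn X y :=
  csInf_mem hne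

noncomputable def chain (X : Set Ordinal.{0}) (d : Ordinal → Ordinal) : Ordinal → Ordinal :=
  fun b => Ordinal.limitRecOn b (sInf X) (fun c ih => nextIn X (max ih (d c)))
    (fun b _ ih => Ordinal.bsup b ih)

lemma chain_zero {X : Set Ordinal.{0}} {d : Ordinal → Ordinal} : chain X d 0 = sInf X :=
  Ordinal.limitRecOn_zero _ _ _

lemma chain_succ {X : Set Ordinal.{0}} {d : Ordinal → Ordinal} (c : Ordinal) :
    chain X d (Order.succ c) = nextIn X (max (chain X d c) (d c)) :=
  Ordinal.limitRecOn_succ _ _ _ _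

lemma chain_limit {X : Set Ordinal.{0}} {d : Ordinal → Ordinal} {b : Ordinal}
    (hb : Order.IsSuccLimit b) : chain X d b = Ordinal.bsup b (fun c _ => chain X d c) :=
  Ordinal.limitRecOn_limit _ _ _ _ hb

lemma chain_props {X : Set Ordinal.{0}} {ℓ B : Ordinal} {d : Ordinal → Ordinal}
    (hℓ : Order.IsSuccLimit ℓ) (hXsub : ∀ x ∈ X, x < ℓ) (hXunb : ∀ γ < ℓ, ∃ x ∈ X, γ ≤ x)
    (hXcl : ∀ δ < ℓ, IsAcc X δ → δ ∈ X)
    (hd : ∀ c, c < B → d c < ℓ) (hsmall : ∀ b, b < B → b.card < ℓ.cof) :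
    ∀ b, b < B → chain X d b < ℓ ∧ chain X d b ∈ X ∧
      ∀ c, c < b → chain X d c < chain X d b := by
  intro b
  induction b using Ordinal.induction with
  | _ b IH =>
  intro hbB
  rcases Ordinal.zero_or_succ_or_isSuccLimit b with rfl | ⟨c, rfl⟩ | hblim
  · have hne : X.Nonempty := by
      obtain ⟨x, hx, -⟩ := hXunb 0 hℓ.pos
      exact ⟨x, hx⟩
    have hmem : chain X d 0 ∈ X := by rw [chain_zero]; exact csInf_mem hne
    exact ⟨hXsub _ hmem, hmem, fun c hc => absurd hc (not_lt_of_ge (zero_le : (0:Ordinal) ≤ c))⟩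
  · have hcB : c < B := lt_trans (Order.lt_succ c) hbB
    obtain ⟨hc1, hc2, hc3⟩ := IH c (Order.lt_succ c) hcB
    set y := max (chain X d c) (d c) with hy
    have hyℓ : y < ℓ := max_lt hc1 (hd c hcB)
    have hne : {x | x ∈ X ∧ y < x}.Nonempty := by
      obtain ⟨x, hx, hxy⟩ := hXunb (Order.succ y) (hℓ.succ_lt hyℓ)
      exact ⟨x, hx, lt_of_lt_of_le (Order.lt_succ y) hxy⟩
    have hspec := nextIn_spec hne
    rw [← chain_succ] at hspec
    refine ⟨hXsub _ hspec.1, hspec.1, fun c' hc' => ?_⟩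
    have hc'c : c' ≤ c := Order.le_of_lt_succ hc'
    have : chain X d c' ≤ chain X d c := by
      rcases eq_or_lt_of_le hc'c with rfl | hlt
      · exact le_rfl
      · exact (hc3 c' hlt).le
    exact lt_of_le_of_lt (le_trans this (le_max_left _ _)) hspec.2
  · have heq := chain_limit (X := X) (d := d) hblim
    have hmono : ∀ c, c < b → chain X d c < chain X d b := by
      intro c hc
      have hsc : Order.succ c < b := hblim.succ_lt hc
      have h1 : chain X d c < chain X d (Order.succ c) :=
        (IH _ hsc (lt_trans hsc hbB)).2.2 c (Order.lt_succ c)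
      refine lt_of_lt_of_le h1 ?_
      rw [heq]
      exact Ordinal.le_bsup _ _ hsc
    have hlt : chain X d b < ℓ := by
      rw [heq]
      exact Ordinal.bsup_lt_ord (hsmall b hbB)
        (fun c hc => (IH c hc (lt_trans hc hbB)).1)
    have hacc : IsAcc X (chain X d b) := by
      constructor
      · exact lt_of_le_of_lt (zero_le) (hmono 0 hblim.pos)
      · intro γ hγ
        rw [heq] at hγ
        obtain ⟨c, hc, hγc⟩ := (Ordinal.lt_bsup _).1 hγ
        have hsc : Order.succ c < b := hblim.succ_lt hc
        refine ⟨chain X d (Order.succ c), (IH _ hsc (lt_trans hsc hbB)).2.1, ?_, hmono _ hsc⟩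
        exact lt_trans hγc ((IH _ hsc (lt_trans hsc hbB)).2.2 c (Order.lt_succ c))
    exact ⟨hlt, hXcl _ hlt hacc, hmono⟩


lemma chain_acc_limit {X : Set Ordinal.{0}} {ℓ B : Ordinal} {d : Ordinal → Ordinal}
    (hℓ : Order.IsSuccLimit ℓ) (hXsub : ∀ x ∈ X, x < ℓ) (hXunb : ∀ γ < ℓ, ∃ x ∈ X, γ ≤ x)
    (hXcl : ∀ δ < ℓ, IsAcc X δ → δ ∈ X)
    (hd : ∀ c, c < B → d c < ℓ) (hsmall : ∀ b, b < B → b.card < ℓ.cof)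
    (hB : Order.IsSuccLimit B) (hBcard : B.card < ℓ.cof) :
    chain X d B < ℓ ∧ chain X d B ∈ X ∧ Order.IsSuccLimit (chain X d B) ∧
      (∀ c, c < B → chain X d c < chain X d B) := by
  have P := chain_props hℓ hXsub hXunb hXcl hd hsmall
  have heq := chain_limit (X := X) (d := d) hB
  have hmono : ∀ c, c < B → chain X d c < chain X d B := by
    intro c hc
    have hsc : Order.succ c < B := hB.succ_lt hc
    refine lt_of_lt_of_le ((P _ hsc).2.2 c (Order.lt_succ c)) ?_
    rw [heq]
    exact Ordinal.le_bsup _ _ hsc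
  have hlt : chain X d B < ℓ := by
    rw [heq]
    exact Ordinal.bsup_lt_ord hBcard (fun c hc => (P c hc).1)
  have hacc : IsAcc X (chain X d B) := by
    constructor
    · exact lt_of_le_of_lt (zero_le) (hmono 0 hB.pos)
    · intro γ hγ
      rw [heq] at hγ
      obtain ⟨c, hc, hγc⟩ := (Ordinal.lt_bsup _).1 hγ
      have hsc : Order.succ c < B := hB.succ_lt hc
      exact ⟨chain X d (Order.succ c), (P _ hsc).2.1,
        lt_trans hγc ((P _ hsc).2.2 c (Order.lt_succ c)), hmono _ hsc⟩
  have hlim : Order.IsSuccLimit (chain X d B) := by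
    refine Ordinal.isSuccLimit_iff.2 ⟨(lt_of_le_of_lt (zero_le) (hmono 0 hB.pos)).ne', Order.isSuccPrelimit_of_succ_lt fun a ha => ?_⟩
    rw [heq] at ha
    obtain ⟨c, hc, hac⟩ := (Ordinal.lt_bsup _).1 ha
    have hsc : Order.succ c < B := hB.succ_lt hc
    refine lt_of_le_of_lt ?_ (hmono _ hsc)
    exact Order.succ_le_of_lt (lt_of_lt_of_le hac ((P _ hsc).2.2 c (Order.lt_succ c)).le)
  exact ⟨hlt, hXcl _ hlt hacc, hlim, hmono⟩

lemma exists_cof_point {lam : Ordinal.{0}} {X : Set Ordinal.{0}} {μ : Cardinal.{0}}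
    (hμ : μ.IsRegular) (hlam : Order.IsSuccLimit lam) (hμlam : μ < lam.cof)
    (hX : IsClubIn X lam) :
    ∃ α, α ∈ X ∧ α < lam ∧ Order.IsSuccLimit α ∧ α.cof = μ := by
  obtain ⟨hXsub, hXunb, hXcl⟩ := hX
  have hM : Order.IsSuccLimit (μ.ord) := Cardinal.isSuccLimit_ord hμ.1
  have hsmall : ∀ b, b < μ.ord → b.card < lam.cof :=
    fun b hb => lt_trans (Cardinal.lt_ord.1 hb) hμlam
  have hd : ∀ c, c < μ.ord → (fun _ : Ordinal => (0 : Ordinal)) c < lam :=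
    fun c _ => hlam.pos
  have hMcard : (μ.ord).card < lam.cof := by rw [Cardinal.card_ord]; exact hμlam
  obtain ⟨hlt, hmem, hlim, hmono⟩ :=
    chain_acc_limit hlam hXsub hXunb hXcl hd hsmall hM hMcard
  set α := chain X (fun _ => 0) μ.ord with hα
  have P := chain_props (B := μ.ord) hlam hXsub hXunb hXcl hd hsmall
  have heq := chain_limit (X := X) (d := fun _ : Ordinal => (0:Ordinal)) hM
  refine ⟨α, hmem, hlt, hlim, ?_⟩
  -- cofinality computation
  set f : (μ.ord).ToType → Ordinal :=
    fun i => chain X (fun _ => 0) (@Ordinal.typein _ (· < ·) isWellOrder_lt i) with hf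
  have hlsub : Ordinal.lsub f = α := by
    refine le_antisymm (Ordinal.lsub_le fun i => hmono _ (Ordinal.typein_lt_self i)) ?_
    rw [hα, heq]
    refine Ordinal.bsup_le fun c hc => ?_
    have hc' : c < @Ordinal.type (μ.ord).ToType (· < ·) isWellOrder_lt := by
      rwa [Ordinal.type_toType]
    obtain ⟨i, hi⟩ := @Ordinal.typein_surj _ (· < ·) isWellOrder_lt _ hc'
    exact le_of_lt (hi ▸ Ordinal.lt_lsub f i)
  have hle : α.cof ≤ μ := by
    calc α.cof = (Ordinal.lsub f).cof := by rw [hlsub]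
    _ ≤ #(μ.ord).ToType := Ordinal.cof_lsub_le f
    _ = μ := by rw [Cardinal.mk_toType, Cardinal.card_ord]
  have hge : μ ≤ α.cof := by
    have hScof := Ordinal.cof_eq_sInf_lsub α
    have hSne : {a : Cardinal.{0} | ∃ (ι : Type 0) (f : ι → Ordinal), Ordinal.lsub f = α ∧ #ι = a}.Nonempty :=
      ⟨#(μ.ord).ToType, (μ.ord).ToType, f, hlsub, rfl⟩
    have hmem' : α.cof ∈ {a : Cardinal.{0} | ∃ (ι : Type 0) (f : ι → Ordinal),
        Ordinal.lsub f = α ∧ #ι = a} := by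
      rw [hScof]
      exact csInf_mem hSne
    obtain ⟨ι, g, hg, hcard⟩ := hmem'
    have hch : ∀ i : ι, ∃ c, ∃ _ : c < μ.ord, g i < chain X (fun _ => 0) c := by
      intro i
      have : g i < α := hg ▸ Ordinal.lt_lsub g i
      rw [hα, heq] at this
      exact (Ordinal.lt_bsup _).1 this
    set cs : ι → Ordinal := fun i => (hch i).choose with hcs
    have hcsM : ∀ i, cs i < μ.ord := fun i => (hch i).choose_spec.choose
    have hcsg : ∀ i, g i < chain X (fun _ => 0) (cs i) :=
      fun i => (hch i).choose_spec.choose_spec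
    have hL : Ordinal.lsub cs = μ.ord := by
      refine le_antisymm (Ordinal.lsub_le hcsM) ?_
      by_contra hlt'
      push_neg at hlt'
      have hLM : Ordinal.lsub cs < μ.ord := hlt'
      have : α ≤ chain X (fun _ => 0) (Ordinal.lsub cs) := by
        rw [← hg]
        refine Ordinal.lsub_le fun i => ?_
        exact lt_trans (hcsg i) ((P _ hLM).2.2 (cs i) (Ordinal.lt_lsub cs i))
      exact absurd (lt_of_le_of_lt this (hmono _ hLM)) (lt_irrefl α)
    calc μ = (μ.ord).cof := (hμ.cof_eq).symm
    _ = (Ordinal.lsub cs).cof := by rw [hL]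
    _ ≤ #ι := Ordinal.cof_lsub_le cs
    _ = α.cof := hcard
  exact le_antisymm hle hge


lemma exists_u {ℓ : Ordinal.{0}} {X : Set Ordinal.{0}} {μ : Cardinal.{0}}
    (hμ : μ.IsRegular) (hℓ : Order.IsSuccLimit ℓ) (hcof : ℓ.cof = μ) (hX : IsClubIn X ℓ) :
    ∃ (u : Set Ordinal.{1}) (idx : Ordinal.{1} → Ordinal.{0}),
      (∀ y ∈ u, y < otp X) ∧ BddAbove u ∧ sSup u = otp X ∧
      (∀ x, IsAcc u x → x < sSup u → x ∈ u) ∧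
      (∀ y ∈ u, idx y < μ.ord) ∧
      (∀ y z, y ∈ u → z ∈ u → y < z → idx y < idx z) := by
  obtain ⟨hXsub, hXunb, hXcl⟩ := hX
  have hM : Order.IsSuccLimit (μ.ord) := Cardinal.isSuccLimit_ord hμ.1
  -- a cofinal family of size μ
  have hmem' : ∃ (ι : Type 0) (g : ι → Ordinal), Ordinal.lsub g = ℓ ∧ #ι = μ := by
    have h := Ordinal.cof_eq_sInf_lsub ℓ
    have hne : {a : Cardinal.{0} | ∃ (ι : Type 0) (f : ι → Ordinal),
        Ordinal.lsub f = ℓ ∧ #ι = a}.Nonempty :=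
      ⟨_, _, _, Ordinal.lsub_typein ℓ, Cardinal.mk_toType ℓ⟩
    have := csInf_mem hne
    rw [← h, hcof] at this
    exact this
  obtain ⟨ι, g, hg, hcard⟩ := hmem'
  have hequiv : Nonempty (ι ≃ (μ.ord).ToType) := by
    rw [← Cardinal.eq, hcard]
    rw [Cardinal.mk_toType, Cardinal.card_ord]
  obtain ⟨e⟩ := hequiv
  set iso := (Ordinal.ToType.mk (o := μ.ord)) with hiso
  set d : Ordinal → Ordinal := fun c =>
    if h : c < μ.ord then g (e.symm (iso ⟨c, h⟩)) else 0 with hd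
  have hdlt : ∀ c, c < μ.ord → d c < ℓ := by
    intro c hc
    rw [hd]
    simp only [hc, dif_pos]
    exact hg ▸ Ordinal.lt_lsub g _
  have hsmall : ∀ b, b < μ.ord → b.card < ℓ.cof := by
    intro b hb
    rw [hcof]
    exact Cardinal.lt_ord.1 hb
  have P₀ := chain_props (d := d) hℓ hXsub hXunb hXcl hdlt hsmall
  set ch := chain X d with hch
  have P : ∀ b, b < μ.ord → ch b < ℓ ∧ ch b ∈ X ∧ ∀ c, c < b → ch c < ch b := P₀
  -- the chain reaches cofinally high
  have hcov : ∀ γ, γ < ℓ → ∃ b, b < μ.ord ∧ γ < ch b := by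
    intro γ hγ
    rw [← hg] at hγ
    obtain ⟨i, hi⟩ := Ordinal.lt_lsub_iff.1 hγ
    set j := iso.symm (e i) with hj
    have hjlt : (j : Ordinal) < μ.ord := j.2
    have hdj : d j.1 = g i := by
      have h1 : d j.1 = g (e.symm (iso ⟨j.1, hjlt⟩)) := by
        rw [hd]
        exact dif_pos hjlt
      have h2 : (⟨j.1, hjlt⟩ : Set.Iio μ.ord) = j := Subtype.ext rfl
      rw [h1, h2, hj]
      simp
    refine ⟨Order.succ j.1, hM.succ_lt hjlt, ?_⟩
    have hyℓ : max (ch j.1) (d j.1) < ℓ := max_lt (P j.1 hjlt).1 (hdlt _ hjlt)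
    have hne : {x | x ∈ X ∧ max (ch j.1) (d j.1) < x}.Nonempty := by
      obtain ⟨x, hx, hxy⟩ := hXunb (Order.succ _) (hℓ.succ_lt hyℓ)
      exact ⟨x, hx, lt_of_lt_of_le (Order.lt_succ _) hxy⟩
    have hspec := nextIn_spec hne
    rw [← chain_succ] at hspec
    calc γ ≤ g i := hi
    _ = d j.1 := hdj.symm
    _ ≤ max (ch j.1) (d j.1) := le_max_right _ _
    _ < ch (Order.succ j.1) := hspec.2
  set posG : Ordinal.{0} → Ordinal.{1} := fun b => otp (X ∩ Set.Iio (ch b)) with hposG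
  have hposmono : ∀ b c, b < μ.ord → c < μ.ord → b < c → posG b < posG c := by
    intro b c hb hc hbc
    exact pos_lt_pos (P b hb).2.1 (P c hc).2.1 ((P c hc).2.2 b hbc)
  have hposmono' : ∀ b c, b < μ.ord → c < μ.ord → posG b < posG c → b < c := by
    intro b c hb hc h
    by_contra hcb
    push_neg at hcb
    rcases eq_or_lt_of_le hcb with rfl | hlt
    · exact absurd h (lt_irrefl _)
    · exact absurd (lt_trans h (hposmono c b hc hb hlt)) (lt_irrefl _)
  set u : Set Ordinal.{1} := posG '' (Set.Iio μ.ord) with hu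
  have humem : ∀ y ∈ u, ∃ b, b < μ.ord ∧ posG b = y := by
    rintro y ⟨b, hb, rfl⟩
    exact ⟨b, hb, rfl⟩
  have husub : ∀ y ∈ u, y < otp X := by
    intro y hy
    obtain ⟨b, hb, rfl⟩ := humem y hy
    exact pos_lt_otp (P b hb).2.1
  have hbdd : BddAbove u := ⟨otp X, fun y hy => (husub y hy).le⟩
  have hreach : ∀ p, p < otp X → ∃ y ∈ u, p < y := by
    intro p hp
    obtain ⟨z, hz, hzp⟩ := pos_surj hp
    obtain ⟨b, hb, hzb⟩ := hcov z (hXsub z hz)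
    exact ⟨posG b, ⟨b, hb, rfl⟩, hzp ▸ pos_lt_pos hz (P b hb).2.1 hzb⟩
  have hsup : sSup u = otp X := by
    have hne : u.Nonempty := ⟨posG 0, ⟨0, hM.pos, rfl⟩⟩
    refine le_antisymm (csSup_le hne (fun y hy => (husub y hy).le)) ?_
    by_contra hlt'
    push_neg at hlt'
    obtain ⟨y, hy, hys⟩ := hreach _ hlt'
    exact absurd (le_csSup hbdd hy) (not_le.2 hys)
  have hucl : ∀ x, IsAcc u x → x < sSup u → x ∈ u := by
    intro x hx hxs
    rw [hsup] at hxs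
    obtain ⟨y₀, hy₀u, hy₀x⟩ := hreach x hxs
    obtain ⟨b₀, hb₀, hb₀eq⟩ := humem y₀ hy₀u
    set Sb := {b : Ordinal | x ≤ posG b} with hSb
    have hb₀Sb : b₀ ∈ Sb := le_of_lt (hb₀eq ▸ hy₀x)
    set bs := sInf Sb with hbs
    have hbsmem : x ≤ posG bs := csInf_mem ⟨b₀, hb₀Sb⟩
    have hbsM : bs < μ.ord := lt_of_le_of_lt (csInf_le (OrderBot.bddBelow _) hb₀Sb) hb₀
    have hlow : ∀ c, c < bs → posG c < x := by
      intro c hc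
      have := notMem_of_lt_csInf hc (OrderBot.bddBelow _)
      rw [hSb] at this
      exact not_le.1 this
    -- bs is nonzero
    have hbs0 : bs ≠ 0 := by
      intro h0
      obtain ⟨y, hy, hy1, hy2⟩ := hx.2 0 hx.1
      obtain ⟨c, hc, rfl⟩ := humem y hy
      have h1 : posG 0 ≤ posG c := by
        rcases eq_or_lt_of_le (zero_le : (0:Ordinal) ≤ c) with rfl | hlt
        · exact le_rfl
        · exact (hposmono 0 c (lt_of_le_of_lt (zero_le) hc) hc hlt).le
      rw [h0] at hbsmem
      exact absurd (lt_of_lt_of_le hy2 (le_trans hbsmem h1)) (lt_irrefl _)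
    -- bs is not a successor
    have hbsnotsucc : ∀ c₀, bs ≠ Order.succ c₀ := by
      intro c₀ hsucc
      have hc₀ : c₀ < bs := hsucc ▸ Order.lt_succ c₀
      obtain ⟨y, hy, hy1, hy2⟩ := hx.2 (posG c₀) (hlow c₀ hc₀)
      obtain ⟨c, hc, rfl⟩ := humem y hy
      have hcc₀ : c₀ < c := hposmono' c₀ c (lt_trans hc₀ hbsM) hc hy1
      have hbsc : bs ≤ c := hsucc ▸ Order.succ_le_of_lt hcc₀
      have : posG bs ≤ posG c := by
        rcases eq_or_lt_of_le hbsc with rfl | hlt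
        · exact le_rfl
        · exact (hposmono bs c hbsM hc hlt).le
      exact absurd (lt_of_lt_of_le hy2 (le_trans hbsmem this)) (lt_irrefl _)
    have hbslim : Order.IsSuccLimit bs := by
      rcases Ordinal.zero_or_succ_or_isSuccLimit bs with h | ⟨c₀, hc₀⟩ | h
      · exact absurd h hbs0
      · exact absurd hc₀.symm (hbsnotsucc c₀)
      · exact h
    -- the value of the chain at bs has position exactly x
    have hble : posG bs ≤ x := by
      by_contra hgt
      push_neg at hgt
      obtain ⟨z, hz, hzx⟩ := pos_surj hxs
      have hzch : z < ch bs := by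
        have := hzx ▸ hgt
        by_contra hzz
        push_neg at hzz
        rcases eq_or_lt_of_le hzz with rfl | hlt
        · exact absurd (hzx ▸ hgt) (lt_irrefl _)
        · exact absurd (lt_trans (hzx ▸ hgt) (pos_lt_pos (P bs hbsM).2.1 hz hlt))
            (lt_irrefl _)
      rw [hch, chain_limit hbslim] at hzch
      obtain ⟨c, hc, hzc⟩ := (Ordinal.lt_bsup _).1 hzch
      have : x < posG c := by
        rw [← hzx]
        exact pos_lt_pos hz (P c (lt_trans hc hbsM)).2.1 hzc
      exact absurd (lt_trans this (hlow c hc)) (lt_irrefl _)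
    exact ⟨bs, hbsM, le_antisymm hble hbsmem⟩
  -- the index function
  set idx : Ordinal.{1} → Ordinal.{0} := fun y => sInf {b | b < μ.ord ∧ posG b = y} with hidx
  have hidxspec : ∀ y ∈ u, idx y < μ.ord ∧ posG (idx y) = y := by
    intro y hy
    obtain ⟨b, hb, rfl⟩ := humem y hy
    have := csInf_mem (s := {b' : Ordinal | b' < μ.ord ∧ posG b' = posG b}) ⟨b, hb, rfl⟩
    exact this
  refine ⟨u, idx, husub, hbdd, hsup, hucl, fun y hy => (hidxspec y hy).1, ?_⟩
  intro y z hy hz hyz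
  obtain ⟨h1, h2⟩ := hidxspec y hy
  obtain ⟨h3, h4⟩ := hidxspec z hz
  apply hposmono' _ _ h1 h3
  rw [h2, h4]
  exact hyz


lemma otp_Iio (b : Ordinal.{0}) : otp (Set.Iio b) = Ordinal.lift.{1,0} b := by
  rw [← Ordinal.typein_ordinal]
  rfl

lemma Dseq_good {lam : Ordinal.{0}} {C : Ordinal → Set Ordinal} {u : Set Ordinal.{1}}
    {idx : Ordinal.{1} → Ordinal.{0}} {μ : Cardinal.{0}}
    (hC : Coherent lam C) (hbdd : BddAbove u)
    (hucl : ∀ x, IsAcc u x → x < sSup u → x ∈ u)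
    (husub : ∀ y ∈ u, y < sSup u)
    (hidx1 : ∀ y ∈ u, idx y < μ.ord)
    (hidx2 : ∀ y z, y ∈ u → z ∈ u → y < z → idx y < idx z)
    {α : Ordinal} (hα : α < lam) (hlim : Order.IsSuccLimit α) (hτ : otp (C α) = sSup u) :
    ∃ ξ, ξ < α ∧ ∀ γ ∈ Dseq lam C u α,
      Ordinal.lift.{1,0} μ.ord ∣ otp (Dseq lam C u α ∩ Set.Iio γ) → γ ≤ ξ := by
  have hDclub := Dseq_isClub hC hbdd hucl hα hlim
  obtain ⟨x₀, hx₀, -⟩ := hDclub.2.1 0 hlim.pos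
  have hEtop : Efam u (otp (C α)) = u := by
    rw [hτ]
    exact Efam_top husub rfl
  have hposu : ∀ δ ∈ Dseq lam C u α, otp (C α ∩ Set.Iio δ) ∈ u := by
    intro δ hδ
    have := hδ.2.2.2
    rwa [hEtop] at this
  refine ⟨x₀, hDclub.1 x₀ hx₀, ?_⟩
  intro γ hγ hdvd
  by_contra hx₀γ
  push_neg at hx₀γ
  have hne : (Dseq lam C u α ∩ Set.Iio γ).Nonempty := ⟨x₀, hx₀, hx₀γ⟩
  have hzero : otp (Dseq lam C u α ∩ Set.Iio γ) ≠ 0 := otp_ne_zero_of_nonempty hne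
  -- the embedding into `Iio (idx (position of γ))`
  have hγC : γ ∈ C α := Dseq_subset hγ
  have hγu : otp (C α ∩ Set.Iio γ) ∈ u := hposu γ hγ
  set bγ := idx (otp (C α ∩ Set.Iio γ)) with hbγ
  have hmap : ∀ δ : ↥(Dseq lam C u α ∩ Set.Iio γ),
      idx (otp (C α ∩ Set.Iio δ.1)) < bγ := by
    intro δ
    exact hidx2 _ _ (hposu δ.1 δ.2.1) hγu
      (pos_lt_pos (Dseq_subset δ.2.1) hγC δ.2.2)
  have hemb : otp (Dseq lam C u α ∩ Set.Iio γ) ≤ otp (Set.Iio bγ) := by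
    refine RelEmbedding.ordinal_type_le (RelEmbedding.ofMonotone
      (fun δ => (⟨idx (otp (C α ∩ Set.Iio δ.1)), hmap δ⟩ : ↥(Set.Iio bγ))) ?_)
    intro a b hab
    exact hidx2 _ _ (hposu a.1 a.2.1) (hposu b.1 b.2.1)
      (pos_lt_pos (Dseq_subset a.2.1) (Dseq_subset b.2.1) hab)
  have hlt : otp (Dseq lam C u α ∩ Set.Iio γ) < Ordinal.lift.{1,0} μ.ord := by
    refine lt_of_le_of_lt hemb ?_
    rw [otp_Iio]
    exact Ordinal.lift_lt.2 (hidx1 _ hγu)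
  exact absurd (Ordinal.le_of_dvd hzero hdvd) (not_le.2 hlt)



lemma exists_tstar {lam : Ordinal.{0}} {C : Ordinal → Set Ordinal} {μ κ : Cardinal.{0}}
    (hμ : μ.IsRegular) (hκ : Cardinal.aleph0 ≤ κ) (hlam : Order.IsSuccLimit lam)
    (hμcof : μ < lam.cof) (hκcof : lam.cof = Order.succ κ)
    (hotp : ∀ α, α < lam → Order.IsSuccLimit α → otp (C α) ≤ Ordinal.lift.{1,0} κ.ord) :
    ∃ t : Ordinal.{1}, ∀ W, IsClubIn W lam →
      ∃ α, α ∈ W ∧ α < lam ∧ Order.IsSuccLimit α ∧ α.cof = μ ∧ otp (C α) = t := by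
  by_contra hcon
  push_neg at hcon
  choose K hK1 hK2 using hcon
  -- the diagonal club
  set W : Set Ordinal.{0} :=
    {x | x < lam ∧ ∀ a : Ordinal.{0}, a ≤ κ.ord → x ∈ K (Ordinal.lift.{1,0} a)} with hW
  have hWsub : ∀ x ∈ W, x < lam := fun x hx => hx.1
  -- next-element functions
  set nxt : Ordinal.{1} → Ordinal.{0} → Ordinal.{0} :=
    fun t y => sInf {x | x ∈ K t ∧ y < x} with hnxt
  have hnxtspec : ∀ t, ∀ y < lam, nxt t y ∈ K t ∧ y < nxt t y := by
    intro t y hy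
    apply csInf_mem (s := {x | x ∈ K t ∧ y < x})
    obtain ⟨x, hx, hxy⟩ := (hK1 t).2.1 (Order.succ y) (hlam.succ_lt hy)
    exact ⟨x, hx, lt_of_lt_of_le (Order.lt_succ y) hxy⟩
  set step : Ordinal.{0} → Ordinal.{0} :=
    fun y => Ordinal.bsup (Order.succ κ.ord)
      (fun a _ => nxt (Ordinal.lift.{1,0} a) y) with hstep
  have hsucccard : (Order.succ κ.ord).card < lam.cof := by
    rw [Ordinal.card_succ, Cardinal.card_ord, Cardinal.add_one_eq hκ, hκcof]
    exact Order.lt_succ κ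
  have hsteplt : ∀ y, y < lam → step y < lam := by
    intro y hy
    refine Ordinal.bsup_lt_ord hsucccard (fun a _ => ?_)
    exact (hK1 _).1 _ (hnxtspec _ y hy).1
  have hstepgt : ∀ y, y < lam → y < step y := by
    intro y hy
    refine lt_of_lt_of_le (hnxtspec (Ordinal.lift.{1,0} 0) y hy).2 ?_
    exact Ordinal.le_bsup _ 0 (Order.bot_lt_succ κ.ord)
  have hWclub : IsClubIn W lam := by
    refine ⟨hWsub, ?_, ?_⟩
    · -- unbounded
      intro γ hγ
      set seq : ℕ → Ordinal.{0} := fun n => Nat.rec (Order.succ γ) (fun _ y => step y) n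
        with hseq
      have hseqlt : ∀ n, seq n < lam := by
        intro n
        induction n with
        | zero => exact hlam.succ_lt hγ
        | succ n ih => exact hsteplt _ ih
      have hseqmono : ∀ n, seq n < seq (n + 1) := fun n => hstepgt _ (hseqlt n)
      have hseqmono' : ∀ m n, m < n → seq m < seq n := by
        intro m n h
        induction n with
        | zero => exact absurd h (Nat.not_lt_zero m)
        | succ n ih =>
          rcases Nat.lt_succ_iff_lt_or_eq.1 h with h' | rfl
          · exact lt_trans (ih h') (hseqmono n)
          · exact hseqmono m
      set x := ⨆ n, seq n with hx
      have hxlt : x < lam := by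
        refine Ordinal.iSup_lt_of_lt_cof ?_ hseqlt
        rw [Cardinal.mk_nat, hκcof]
        exact lt_of_le_of_lt hκ (Order.lt_succ κ)
      have hγx : γ < x := lt_of_lt_of_le (Order.lt_succ γ) (Ordinal.le_iSup seq 0)
      refine ⟨x, ⟨hxlt, fun a ha => ?_⟩, hγx.le⟩
      refine (hK1 _).2.2 x hxlt ⟨lt_of_le_of_lt (zero_le : (0:Ordinal) ≤ γ)
        (lt_of_lt_of_le (Order.lt_succ γ) (Ordinal.le_iSup seq 0)), ?_⟩
      intro δ hδ
      rw [hx] at hδ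
      obtain ⟨n, hn⟩ := Ordinal.lt_iSup_iff.1 hδ
      refine ⟨nxt (Ordinal.lift.{1,0} a) (seq n), (hnxtspec _ _ (hseqlt n)).1,
        lt_trans hn (hnxtspec _ _ (hseqlt n)).2, ?_⟩
      have h1 : nxt (Ordinal.lift.{1,0} a) (seq n) ≤ seq (n + 1) := by
        have := Ordinal.le_bsup (o := Order.succ κ.ord)
          (fun a' _ => nxt (Ordinal.lift.{1,0} a') (seq n)) a
          ((Order.lt_succ_iff_of_not_isMax (by simp)).2 ha)
        exact this
      exact lt_of_le_of_lt h1 (lt_of_lt_of_le (hseqmono (n+1)) (Ordinal.le_iSup seq (n+2)))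
    · -- closed
      intro δ hδ hacc
      refine ⟨hδ, fun a ha => ?_⟩
      refine (hK1 _).2.2 δ hδ ⟨hacc.1, fun γ hγ => ?_⟩
      obtain ⟨y, hy, hy1, hy2⟩ := hacc.2 γ hγ
      exact ⟨y, hy.2 a ha, hy1, hy2⟩
  obtain ⟨α, hαW, hαlam, hαlim, hαcof⟩ := exists_cof_point hμ hlam hμcof hWclub
  obtain ⟨a₀, ha₀⟩ := Ordinal.mem_range_lift_of_le (hotp α hαlam hαlim)
  have ha₀κ : a₀ ≤ κ.ord := by
    rw [← Ordinal.lift_le.{1,0}, ha₀]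
    exact hotp α hαlam hαlim
  exact hK2 (Ordinal.lift.{1,0} a₀) α (hαW.2 a₀ ha₀κ) hαlam hαlim hαcof ha₀.symm

end Stmt17Aux

/-- Let `μ ≤ κ` be infinite cardinals with `μ` regular. If `□_κ` holds
(there is a coherent sequence on `κ⁺` all of whose clubs have order type `≤ κ`),
then `□^μ(κ⁺)` holds. -/
theorem stmt_17 (μ κ : Cardinal) (hμ : μ.IsRegular) (hμκ : μ ≤ κ)
    (hκ : Cardinal.aleph0 ≤ κ)
    (hsq : ∃ C : Ordinal → Set Ordinal,
      Coherent (Order.succ κ).ord C ∧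
      ∀ α, α < (Order.succ κ).ord → Order.IsSuccLimit α →
        otp (C α) ≤ Ordinal.lift.{1,0} κ.ord) :
    SqMu μ (Order.succ κ).ord := by
  classical
  obtain ⟨C, hC, hotp⟩ := hsq
  set lam := (Order.succ κ).ord with hlamdef
  have hreg : (Order.succ κ).IsRegular := Cardinal.isRegular_succ hκ
  have hcof : lam.cof = Order.succ κ := hreg.cof_eq
  have hlamlim : Order.IsSuccLimit lam :=
    Cardinal.isSuccLimit_ord (le_trans hκ (Order.le_succ κ))
  have hμcof : μ < lam.cof := by
    rw [hcof]
    exact lt_of_le_of_lt hμκ (Order.lt_succ κ)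
  obtain ⟨t, ht⟩ := Stmt17Aux.exists_tstar (C := C) hμ hκ hlamlim hμcof hcof hotp
  have hIio : IsClubIn (Set.Iio lam) lam :=
    ⟨fun x hx => hx, fun γ hγ => ⟨γ, hγ, le_rfl⟩, fun δ hδ _ => hδ⟩
  obtain ⟨α₀, -, hα₀lam, hα₀lim, hα₀cof, hα₀t⟩ := ht _ hIio
  obtain ⟨u, idx, husub, hbdd, hsup, hucl, hidx1, hidx2⟩ :=
    Stmt17Aux.exists_u hμ hα₀lim hα₀cof (hC.1 α₀ hα₀lam hα₀lim)
  have husub' : ∀ y ∈ u, y < sSup u := by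
    intro y hy
    rw [hsup]
    exact husub y hy
  refine ⟨Stmt17Aux.Dseq lam C u,
    ⟨Stmt17Aux.Dseq_coherent hC hbdd hucl, Stmt17Aux.Dseq_noThread hlamlim⟩, ?_⟩
  intro W hW
  obtain ⟨α, hαW, hαlam, hαlim, hαcof, hαt⟩ := ht W hW
  have hτ : otp (C α) = sSup u := by rw [hαt, ← hα₀t, hsup]
  obtain ⟨ξ, hξα, hξ⟩ :=
    Stmt17Aux.Dseq_good hC hbdd hucl husub' hidx1 hidx2 hαlam hαlim hτ
  exact ⟨α, ⟨hαlam, hαcof, ξ, hξα, hξ⟩, hαW⟩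
end
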